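/- arXiv:1407.3112 — 2 statements merged into one kernel-verified Lean document; each statement's English description precedes it below -/
import Mathlib

section
/- Let G be a finite group and let φ be an automorphism of Ḡ such that φ(x) is conjugate to x in Ḡ and φ(y) is conjugate to y in Ḡ. Then the action of φ on 𝒫_c preserves the (G×G)-relation: for every pair (g,h) generating G, writing φ·[g,h]_c = [g′,h′]_c, the element g′ is conjugate to g in G and h′ is conjugate to h in G. -/
/-- The free group on two generators. -/
abbrev F2 : Type := FreeGroup Bool

/-- The generator `x` of `F₂`. -/
def fx : F2 := FreeGroup.of true

/-- The generator `y` of `F₂`. -/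
def fy : F2 := FreeGroup.of false

/-- A subgroup `N` of `Γ` *has index `G`* if it is normal with quotient isomorphic to `G`,
equivalently it is the kernel of a surjective homomorphism onto `G`. -/
def HasIndex (G : Type) [Group G] {Γ : Type} [Group Γ] (N : Subgroup Γ) : Prop :=
  ∃ f : Γ →* G, Function.Surjective f ∧ f.ker = N

/-- `N_G`: the intersection of all subgroups of `F₂` of index `G`. -/
def NG (G : Type) [Group G] : Subgroup F2 := sInf {N | HasIndex G N}

instance NG_normal (G : Type) [Group G] : (NG G).Normal := by
  constructor
  intro n hn g
  rw [NG, Subgroup.mem_sInf] at hn ⊢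
  rintro N ⟨f, hf, rfl⟩
  have h1 : f n = 1 := hn f.ker ⟨f, hf, rfl⟩
  simp [MonoidHom.mem_ker, h1]

/-- The group `Ḡ = F₂ / N_G`. -/
abbrev Gbar (G : Type) [Group G] : Type := F2 ⧸ NG G

/-- The canonical generator `x` of `Ḡ`. -/
def xbar (G : Type) [Group G] : Gbar G := QuotientGroup.mk fx

/-- The canonical generator `y` of `Ḡ`. -/
def ybar (G : Type) [Group G] : Gbar G := QuotientGroup.mk fy

/-- The subgroup of inner automorphisms of `G`. -/
def Inn (G : Type) [Group G] : Subgroup (MulAut G) := (MulAut.conj : G →* MulAut G).range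

instance Inn_normal (G : Type) [Group G] : (Inn G).Normal := by
  constructor
  rintro n ⟨g, rfl⟩ φ
  refine ⟨φ g, ?_⟩
  ext h
  simp [MulAut.conj_apply, MulAut.inv_def, map_mul, map_inv]

/-- The outer automorphism group of `G`. -/
abbrev OutG (G : Type) [Group G] : Type := MulAut G ⧸ Inn G

/-- The canonical projection `Aut(G) → Out(G)`. -/
def OutMk {G : Type} [Group G] : MulAut G →* OutG G := QuotientGroup.mk' (Inn G)

/-- `𝒫`: the set of pairs of elements generating `G`. -/
def GenPairs (G : Type) [Group G] : Set (G × G) := {p | Subgroup.closure {p.1, p.2} = ⊤}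

/-- The setoid on `𝒫` given by simultaneous conjugation (the action of inner automorphisms). -/
def pairSetoid (G : Type) [Group G] : Setoid ↥(GenPairs G) where
  r p q := ∃ t : G, t * (p : G × G).1 * t⁻¹ = (q : G × G).1 ∧
    t * (p : G × G).2 * t⁻¹ = (q : G × G).2
  iseqv := by
    constructor
    · intro p; exact ⟨1, by simp, by simp⟩
    · rintro p q ⟨t, h1, h2⟩
      exact ⟨t⁻¹, by rw [← h1]; group, by rw [← h2]; group⟩
    · rintro p q s ⟨t, h1, h2⟩ ⟨u, h3, h4⟩
      exact ⟨u * t, by rw [← h3, ← h1]; group, by rw [← h4, ← h2]; group⟩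

/-- `𝒫_c`: the set of generating pairs of `G` up to simultaneous conjugation. -/
abbrev PC (G : Type) [Group G] : Type := Quotient (pairSetoid G)

/-- The class `[g,h]_c` in `𝒫_c` of a generating pair. -/
def pcMk {G : Type} [Group G] (p : G × G) (hp : p ∈ GenPairs G) : PC G :=
  Quotient.mk (pairSetoid G) ⟨p, hp⟩

/-- An automorphism of `G` applied to a generating pair. -/
def autPair {G : Type} [Group G] (α : MulAut G) (p : ↥(GenPairs G)) : ↥(GenPairs G) :=
  ⟨(α (p : G × G).1, α (p : G × G).2), by
    have hp : Subgroup.closure {(p : G × G).1, (p : G × G).2} = ⊤ := p.2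
    show Subgroup.closure {α (p : G × G).1, α (p : G × G).2} = ⊤
    have h1 : ({α (p : G × G).1, α (p : G × G).2} : Set G)
        = α.toMonoidHom '' {(p : G × G).1, (p : G × G).2} := by
      rw [Set.image_pair]; rfl
    rw [h1, ← MonoidHom.map_closure, hp]
    exact Subgroup.map_top_of_surjective _ α.surjective⟩

/-- The action of `Aut(G)` on `𝒫_c`, inducing the action of `Out(G)`. -/
instance pcAction (G : Type) [Group G] : MulAction (MulAut G) (PC G) where
  smul α := Quotient.map (autPair α) (by
    rintro p q ⟨t, h1, h2⟩
    refine ⟨α t, ?_, ?_⟩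
    · show α t * α (p : G × G).1 * (α t)⁻¹ = α (q : G × G).1
      rw [← map_inv, ← map_mul, ← map_mul, h1]
    · show α t * α (p : G × G).2 * (α t)⁻¹ = α (q : G × G).2
      rw [← map_inv, ← map_mul, ← map_mul, h2])
  one_smul := by
    intro z
    induction z using Quotient.ind
    rfl
  mul_smul := by
    intro a b z
    induction z using Quotient.ind
    rfl

/-- `[α(g), α(h)]_c` for a generating pair `(g,h)` and `α ∈ Aut(G)`. -/
def pcMkA {G : Type} [Group G] (α : MulAut G) (p : G × G) (hp : p ∈ GenPairs G) : PC G :=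
  α • pcMk p hp

/-- The characterizing property of the action of `Out(Ḡ)` on `𝒫_c`:
`φ·[α(x_i),α(y_i)]_c = [α(φ_i⁻¹(x_{σ(i)})), α(φ_i⁻¹(y_{σ(i)}))]_c` whenever
`p_{σ(i)} ∘ φ = φ_i ∘ p_i`. -/
def IsPCAction (G : Type) [Group G] {r : ℕ} (rep : Fin r → G × G)
    (hrep : ∀ i, rep i ∈ GenPairs G) (p : Fin r → (Gbar G →* G))
    (Φ : OutG (Gbar G) →* Equiv.Perm (PC G)) : Prop :=
  ∀ (φ : MulAut (Gbar G)) (σ : Equiv.Perm (Fin r)) (ψ : Fin r → MulAut G),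
    (∀ i, (p (σ i)).comp φ.toMonoidHom = (ψ i).toMonoidHom.comp (p i)) →
    ∀ (α : MulAut G) (i : Fin r),
      Φ (OutMk φ) (pcMkA α (rep i) (hrep i)) = pcMkA (α * (ψ i)⁻¹) (rep (σ i)) (hrep (σ i))

/-- Swapping the two entries of a generating pair. -/
def swapPair {G : Type} [Group G] (p : ↥(GenPairs G)) : ↥(GenPairs G) :=
  ⟨((p : G × G).2, (p : G × G).1), by
    have hp : Subgroup.closure {(p : G × G).1, (p : G × G).2} = ⊤ := p.2
    show Subgroup.closure {(p : G × G).2, (p : G × G).1} = ⊤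
    rwa [Set.pair_comm]⟩

/-- The map `(g,h) ↦ (h⁻¹g⁻¹, h)` on generating pairs. -/
def deltaPair {G : Type} [Group G] (p : ↥(GenPairs G)) : ↥(GenPairs G) :=
  ⟨((p : G × G).2⁻¹ * (p : G × G).1⁻¹, (p : G × G).2), by
    have hp : Subgroup.closure {(p : G × G).1, (p : G × G).2} = ⊤ := p.2
    show Subgroup.closure {(p : G × G).2⁻¹ * (p : G × G).1⁻¹, (p : G × G).2} = ⊤
    rw [eq_top_iff, ← hp]
    refine (Subgroup.closure_le _).mpr ?_
    have hb : (p : G × G).2 ∈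
        Subgroup.closure ({(p : G × G).2⁻¹ * (p : G × G).1⁻¹, (p : G × G).2} : Set G) :=
      Subgroup.subset_closure (by simp)
    have hc : (p : G × G).2⁻¹ * (p : G × G).1⁻¹ ∈
        Subgroup.closure ({(p : G × G).2⁻¹ * (p : G × G).1⁻¹, (p : G × G).2} : Set G) :=
      Subgroup.subset_closure (by simp)
    have ha : (p : G × G).1 ∈
        Subgroup.closure ({(p : G × G).2⁻¹ * (p : G × G).1⁻¹, (p : G × G).2} : Set G) := by
      have := Subgroup.inv_mem _ (Subgroup.mul_mem _ hb hc)
      simpa [mul_assoc] using this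
    rintro z hz
    rcases hz with rfl | rfl
    · exact ha
    · exact hb⟩

/-!
By the defining property of the action, `φ·[α(x_i), α(y_i)]_c = [α ψ⁻¹(x_{σ(i)}), α ψ⁻¹(y_{σ(i)})]_c`
where `p_{σ(i)} ∘ φ = ψ ∘ p_i`. Applying `p_{σ(i)}` to `x ~ φ(x)` gives
`x_{σ(i)} = p_{σ(i)}(x) ~ p_{σ(i)}(φ x) = ψ(x_i)`, so the first entry `α ψ⁻¹(x_{σ(i)})` is conjugate
to `α(x_i)`, and likewise for `y`.
-/

theorem closure_fx_fy : Subgroup.closure ({fx, fy} : Set F2) = ⊤ := by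
  rw [eq_top_iff, ← FreeGroup.closure_range_of Bool, Subgroup.closure_le]
  rintro z ⟨_ | _, rfl⟩
  · exact Subgroup.subset_closure (Or.inr rfl)
  · exact Subgroup.subset_closure (Or.inl rfl)

section Gbar

variable {G : Type} [Group G]

theorem closure_xbar_ybar : Subgroup.closure ({xbar G, ybar G} : Set (Gbar G)) = ⊤ := by
  have himage : ({xbar G, ybar G} : Set (Gbar G)) = QuotientGroup.mk' (NG G) '' {fx, fy} := by
    rw [Set.image_pair]; rfl
  rw [himage, ← MonoidHom.map_closure, closure_fx_fy]
  exact Subgroup.map_top_of_surjective _ (QuotientGroup.mk'_surjective _)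

theorem Gbar.hom_ext {H : Type*} [Group H] {f g : Gbar G →* H}
    (hx : f (xbar G) = g (xbar G)) (hy : f (ybar G) = g (ybar G)) : f = g := by
  refine QuotientGroup.monoidHom_ext _ (FreeGroup.ext_hom _ _ fun b => ?_)
  cases b
  · exact hy
  · exact hx

end Gbar

section GenPairs

variable {G : Type} {H : Type*} [Group G] [Group H]

theorem mem_genPairs_of_surjective {f : H →* G} (hf : Function.Surjective f) {a b : H}
    (hab : Subgroup.closure {a, b} = ⊤) : (f a, f b) ∈ GenPairs G := by
  show Subgroup.closure {f a, f b} = ⊤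
  rw [← Set.image_pair, ← MonoidHom.map_closure, hab]
  exact Subgroup.map_top_of_surjective f hf

theorem surjective_of_mem_genPairs {f : H →* G} {a b : H} (hab : (f a, f b) ∈ GenPairs G) :
    Function.Surjective f := by
  rw [← MonoidHom.range_eq_top, eq_top_iff, ← hab, Subgroup.closure_le]
  rintro z (rfl | rfl)
  exacts [⟨a, rfl⟩, ⟨b, rfl⟩]

theorem isConj_of_pcMk_eq_pcMkA {a q : G × G} {ha : a ∈ GenPairs G} {hq : q ∈ GenPairs G}
    {α : MulAut G} (h : pcMk a ha = pcMkA α q hq) : IsConj a.1 (α q.1) ∧ IsConj a.2 (α q.2) := by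
  obtain ⟨t, h₁, h₂⟩ := Quotient.exact h
  exact ⟨isConj_iff.mpr ⟨t, h₁⟩, isConj_iff.mpr ⟨t, h₂⟩⟩

end GenPairs

theorem isConj_of_comp_eq {H G : Type*} [Group H] [Group G] {f g : H →* G} {φ : MulAut H}
    {ψ : MulAut G} (hcomp : f.comp φ.toMonoidHom = ψ.toMonoidHom.comp g) {a : H}
    (ha : IsConj a (φ a)) : IsConj (f a) (ψ (g a)) := by
  have hfa : f (φ a) = ψ (g a) := DFunLike.congr_fun hcomp a
  exact hfa ▸ f.map_isConj ha

section Representatives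

variable {G : Type} [Group G] {r : ℕ} {rep : Fin r → G × G} {p : Fin r → (Gbar G →* G)}

theorem exists_eq_comp_of_surjective
    (hcover : ∀ q ∈ GenPairs G, ∃ i : Fin r, ∃ α : MulAut G, (α (rep i).1, α (rep i).2) = q)
    (hp : ∀ i, p i (xbar G) = (rep i).1 ∧ p i (ybar G) = (rep i).2)
    {f : Gbar G →* G} (hf : Function.Surjective f) :
    ∃ i, ∃ β : MulAut G, f = β.toMonoidHom.comp (p i) := by
  obtain ⟨i, β, hβ⟩ := hcover _ (mem_genPairs_of_surjective hf closure_xbar_ybar)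
  refine ⟨i, β, Gbar.hom_ext ?_ ?_⟩
  · simpa [(hp i).1] using (congrArg Prod.fst hβ).symm
  · simpa [(hp i).2] using (congrArg Prod.snd hβ).symm

theorem eq_of_eq_comp
    (hdist : ∀ i j : Fin r, (∃ α : MulAut G, (α (rep i).1, α (rep i).2) = rep j) → i = j)
    (hp : ∀ i, p i (xbar G) = (rep i).1 ∧ p i (ybar G) = (rep i).2)
    {i j : Fin r} {β : MulAut G} (h : p j = β.toMonoidHom.comp (p i)) : i = j := by
  refine hdist i j ⟨β, Prod.ext ?_ ?_⟩
  · simpa [(hp i).1, (hp j).1] using (DFunLike.congr_fun h (xbar G)).symm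
  · simpa [(hp i).2, (hp j).2] using (DFunLike.congr_fun h (ybar G)).symm

/-- Each `p_i ∘ φ` is again onto `G`, hence of the form `β ∘ p_j`; the map `i ↦ j` is injective
because distinct `p_i` are not related by an automorphism of `G`, so it is a permutation. -/
theorem exists_perm_comp_eq
    (hrep : ∀ i, rep i ∈ GenPairs G)
    (hdist : ∀ i j : Fin r, (∃ α : MulAut G, (α (rep i).1, α (rep i).2) = rep j) → i = j)
    (hcover : ∀ q ∈ GenPairs G, ∃ i : Fin r, ∃ α : MulAut G, (α (rep i).1, α (rep i).2) = q)
    (hp : ∀ i, p i (xbar G) = (rep i).1 ∧ p i (ybar G) = (rep i).2) (φ : MulAut (Gbar G)) :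
    ∃ (σ : Equiv.Perm (Fin r)) (ψ : Fin r → MulAut G),
      ∀ i, (p (σ i)).comp φ.toMonoidHom = (ψ i).toMonoidHom.comp (p i) := by
  have hsurj : ∀ i, Function.Surjective (p i) := fun i =>
    surjective_of_mem_genPairs (a := xbar G) (b := ybar G)
      (by rw [(hp i).1, (hp i).2]; exact hrep i)
  choose τ β hβ using fun i =>
    exists_eq_comp_of_surjective (f := (p i).comp φ.toMonoidHom) hcover hp
      ((hsurj i).comp φ.surjective)
  have hτ : Function.Injective τ := by
    intro i i' hii
    refine eq_of_eq_comp hdist hp (β := β i' * (β i)⁻¹) (MonoidHom.ext fun z => ?_)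
    obtain ⟨w, rfl⟩ := φ.surjective z
    have hi := DFunLike.congr_fun (hβ i) w
    have hi' := DFunLike.congr_fun (hβ i') w
    simp only [MonoidHom.comp_apply, MulEquiv.coe_toMonoidHom, MulAut.mul_apply] at hi hi' ⊢
    rw [hi, hi', hii, MulAut.inv_apply_self]
  let e := Equiv.ofBijective τ (Finite.injective_iff_bijective.mp hτ)
  refine ⟨e.symm, fun i => β (e.symm i), fun i => ?_⟩
  simpa only [e, Equiv.ofBijective_apply_symm_apply] using hβ (e.symm i)

end Representatives

theorem stmt12_general (G : Type) [Group G]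
    (r : ℕ) (rep : Fin r → G × G)
    (hrep : ∀ i, rep i ∈ GenPairs G)
    (hdist : ∀ i j : Fin r, (∃ α : MulAut G, (α (rep i).1, α (rep i).2) = rep j) → i = j)
    (hcover : ∀ q ∈ GenPairs G, ∃ i : Fin r, ∃ α : MulAut G, (α (rep i).1, α (rep i).2) = q)
    (p : Fin r → (Gbar G →* G))
    (hp : ∀ i, p i (xbar G) = (rep i).1 ∧ p i (ybar G) = (rep i).2)
    (Φ : OutG (Gbar G) →* Equiv.Perm (PC G))
    (hΦ : IsPCAction G rep hrep p Φ)
    (φ : MulAut (Gbar G))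
    (hx : IsConj (xbar G) (φ (xbar G))) (hy : IsConj (ybar G) (φ (ybar G))) :
    ∀ (g h : G) (hgh : (g, h) ∈ GenPairs G) (g' h' : G) (hg'h' : (g', h') ∈ GenPairs G),
      Φ (OutMk φ) (pcMk (g, h) hgh) = pcMk (g', h') hg'h' →
        IsConj g g' ∧ IsConj h h' := by
  intro g h hgh g' h' hg'h' heq
  obtain ⟨σ, ψ, hσψ⟩ := exists_perm_comp_eq hrep hdist hcover hp φ
  obtain ⟨i, α, hα⟩ := hcover (g, h) hgh
  obtain ⟨rfl, rfl⟩ := Prod.ext_iff.mp hα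
  have hact : pcMk (g', h') hg'h' = pcMkA (α * (ψ i)⁻¹) (rep (σ i)) (hrep (σ i)) :=
    heq ▸ hΦ φ σ ψ hσψ α i
  obtain ⟨hg', hh'⟩ := isConj_of_pcMk_eq_pcMkA hact
  have hconj : ∀ a, IsConj a (φ a) → IsConj ((α * (ψ i)⁻¹) (p (σ i) a)) (α (p i a)) :=
    fun a ha => by
      simpa using (α * (ψ i)⁻¹).toMonoidHom.map_isConj (isConj_of_comp_eq (hσψ i) ha)
  have hx' := hconj _ hx
  have hy' := hconj _ hy
  rw [(hp _).1, (hp _).1] at hx'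
  rw [(hp _).2, (hp _).2] at hy'
  exact ⟨(hg'.trans hx').symm, (hh'.trans hy').symm⟩

/-- If `φ(x)` is conjugate to `x` and `φ(y)` to `y` in `Ḡ`, then the action of `φ` on `𝒫_c`
preserves the `(G×G)`-relation: writing `φ·[g,h]_c = [g′,h′]_c`, the element `g′` is conjugate
to `g` and `h′` is conjugate to `h` in `G`. -/
theorem stmt12 (G : Type) [Group G] [Finite G]
    (r : ℕ) (rep : Fin r → G × G)
    (hrep : ∀ i, rep i ∈ GenPairs G)
    (hdist : ∀ i j : Fin r, (∃ α : MulAut G, (α (rep i).1, α (rep i).2) = rep j) → i = j)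
    (hcover : ∀ q ∈ GenPairs G, ∃ i : Fin r, ∃ α : MulAut G, (α (rep i).1, α (rep i).2) = q)
    (p : Fin r → (Gbar G →* G))
    (hp : ∀ i, p i (xbar G) = (rep i).1 ∧ p i (ybar G) = (rep i).2)
    (Φ : OutG (Gbar G) →* Equiv.Perm (PC G))
    (hΦ : IsPCAction G rep hrep p Φ)
    (φ : MulAut (Gbar G))
    (hx : IsConj (xbar G) (φ (xbar G))) (hy : IsConj (ybar G) (φ (ybar G))) :
    ∀ (g h : G) (hgh : (g, h) ∈ GenPairs G) (g' h' : G) (hg'h' : (g', h') ∈ GenPairs G),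
      Φ (OutMk φ) (pcMk (g, h) hgh) = pcMk (g', h') hg'h' →
        IsConj g g' ∧ IsConj h h' :=
  stmt12_general G r rep hrep hdist hcover p hp Φ hΦ φ hx hy
end

section
/- Let G be a finite non-abelian simple group. Then: (1) Aut(G^r) is isomorphic to the wreath product Aut(G) ≀ S_r, i.e., the semidirect product of Aut(G)^r by the symmetric group S_r permuting the factors; (2) Out(G^r) is isomorphic to the wreath product Out(G) ≀ S_r; (3) the action of Out(Ḡ) on 𝒫_c is faithful. -/
/-- The automorphism of `Fin n → A` permuting the coordinates by `σ`. -/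
def permAut (A : Type) [Group A] {n : ℕ} (σ : Equiv.Perm (Fin n)) : MulAut (Fin n → A) where
  toFun f := f ∘ σ.symm
  invFun f := f ∘ σ
  left_inv f := by ext i; simp
  right_inv f := by ext i; simp
  map_mul' f g := rfl

/-- The homomorphism `S_n → Aut(A^n)` permuting the coordinates. -/
def permHom (A : Type) [Group A] (n : ℕ) : Equiv.Perm (Fin n) →* MulAut (Fin n → A) where
  toFun := permAut A
  map_one' := rfl
  map_mul' σ τ := rfl

/-- The wreath product `A ≀ S_n`, i.e. the semidirect product of `A^n` by the symmetric
group `S_n` permuting the factors. -/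
abbrev Wreath (A : Type) [Group A] (n : ℕ) : Type :=
  (Fin n → A) ⋊[permHom A n] Equiv.Perm (Fin n)

/-!
A surjection from `G^n` onto a non-abelian simple group `G` is an automorphism of `G` applied to
one coordinate: the images of the factors are pairwise commuting normal subgroups, so only one of
them is nontrivial. Applied to the coordinates of an automorphism of `G^n` this identifies
`Aut(G^n)` with `Aut(G) ≀ S_n`, under which `Inn(G^n)` corresponds to `Inn(G)^n`; passing to the
quotient gives `Out(G^n) ≅ Out(G) ≀ S_n`.

For faithfulness, `z ↦ (p_i z)_i : Ḡ → G^r` is injective by the definition of `N_G`, and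
surjective because the `p_i` are pairwise non-equivalent surjections onto a non-abelian simple
group (commutators of elements vanishing on disjoint sets of coordinates). If `φ` acts trivially
on `𝒫_c`, then each `p_i ∘ φ` is `p_i` followed by an inner automorphism `conj s_i`, so `φ` is
conjugation by the preimage of `(s_i)_i`.
-/
open Function Subgroup

lemma IsSimpleGroup.injective_of_surjective {G H : Type*} [Group G] [Group H] [IsSimpleGroup G]
    [Nontrivial H] {f : G →* H} (hf : Surjective f) : Injective f := by
  refine (MonoidHom.ker_eq_bot_iff f).mp
    (f.normal_ker.eq_bot_or_eq_top.resolve_right fun htop => ?_)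
  obtain ⟨a, ha⟩ := exists_ne (1 : H)
  obtain ⟨x, rfl⟩ := hf a
  exact ha (MonoidHom.mem_ker.mp (htop ▸ mem_top x))

lemma MonoidHom.eq_of_eq_on_pair {Γ M : Type*} [Group Γ] [Monoid M] {a b : Γ}
    (hab : closure {a, b} = ⊤) {f g : Γ →* M} (ha : f a = g a) (hb : f b = g b) : f = g :=
  eq_of_eqOn_dense hab (by rintro _ (rfl | rfl) <;> assumption)

lemma Subgroup.closure_pair_map_eq_top {Γ Γ' : Type*} [Group Γ] [Group Γ'] {a b : Γ}
    (hab : closure {a, b} = ⊤) {f : Γ →* Γ'} (hf : Surjective f) : closure {f a, f b} = ⊤ := by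
  rw [← Set.image_pair, ← MonoidHom.map_closure, hab, ← MonoidHom.range_eq_map,
    MonoidHom.range_eq_top.mpr hf]

section SurjectionsOntoSimpleGroups

variable {G : Type*} [Group G] {ι : Type*} [DecidableEq ι]

lemma Pi.mul_mulSingle_mul_inv (v : ι → G) (i : ι) (x : G) :
    v * Pi.mulSingle i x * v⁻¹ = Pi.mulSingle i (v i * x * (v i)⁻¹) := by
  ext j
  rcases eq_or_ne j i with rfl | hj <;> simp [*]

variable [IsSimpleGroup G]

/-- `g.ker.map f` is normal in the simple group `G`; if it is trivial, `f` factors through `g`. -/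
lemma map_ker_eq_top_or_exists_mulAut {Γ : Type*} [Group Γ] {f g : Γ →* G}
    (hf : Surjective f) (hg : Surjective g) :
    g.ker.map f = ⊤ ∨ ∃ α : MulAut G, f = α.toMonoidHom.comp g := by
  refine (g.normal_ker.map f hf).eq_bot_or_eq_top.symm.imp_right fun hbot => ?_
  set β := g.liftOfSurjective hg ⟨f, (Subgroup.map_eq_bot_iff _).mp hbot⟩
  have hβ : β.comp g = f := g.liftOfRightInverse_comp _ _ _
  have hβ_surj : Surjective β := fun a => by
    obtain ⟨x, rfl⟩ := hf a
    exact ⟨g x, by rw [← hβ]; rfl⟩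
  exact ⟨MulEquiv.ofBijective β ⟨IsSimpleGroup.injective_of_surjective hβ_surj, hβ_surj⟩,
    hβ.symm⟩

/-- The images of the factors of `G^ι` under `f` are normal and commute with each other, so in
a non-abelian simple group only one of them can be nontrivial. -/
theorem exists_mulAut_comp_eval_of_surjective (hG : ∃ a b : G, a * b ≠ b * a) [Finite ι]
    {f : (ι → G) →* G} (hf : Surjective f) :
    ∃ (i : ι) (α : MulAut G), f = α.toMonoidHom.comp (Pi.evalMonoidHom (fun _ => G) i) := by
  set fi : ι → G →* G := fun i => f.comp (MonoidHom.mulSingle (fun _ => G) i)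
  have range_normal : ∀ i, (fi i).range.Normal := fun i => ⟨by
    rintro _ ⟨x, rfl⟩ g
    obtain ⟨v, rfl⟩ := hf g
    exact ⟨v i * x * (v i)⁻¹, by simp [fi, ← Pi.mul_mulSingle_mul_inv]⟩⟩
  have range_eq_bot : ∀ i j, i ≠ j → (fi i).range = ⊤ → (fi j).range = ⊥ := by
    intro i j hij hi
    refine (range_normal j).eq_bot_or_eq_top.resolve_right fun hj => ?_
    obtain ⟨a, b, hab⟩ := hG
    obtain ⟨x, rfl⟩ : a ∈ (fi i).range := hi ▸ mem_top a
    obtain ⟨y, rfl⟩ : b ∈ (fi j).range := hj ▸ mem_top b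
    exact hab ((Pi.mulSingle_commute (f := fun _ : ι => G) hij x y).map f).eq
  obtain ⟨i, hi⟩ : ∃ i, (fi i).range = ⊤ := by
    by_contra! h
    have hf1 : f = 1 := MonoidHom.pi_ext fun j x => DFunLike.congr_fun
      (MonoidHom.range_eq_bot_iff.mp ((range_normal j).eq_bot_or_eq_top.resolve_right (h j))) x
    obtain ⟨a, ha⟩ := exists_ne (1 : G)
    obtain ⟨v, rfl⟩ := hf a
    exact ha (by rw [hf1]; rfl)
  have f_eq : f = (fi i).comp (Pi.evalMonoidHom (fun _ => G) i) := by
    refine MonoidHom.pi_ext fun j x => ?_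
    rcases eq_or_ne j i with rfl | hj
    · simp [fi]
    · have hfj : fi j x = 1 := by
        rw [MonoidHom.range_eq_bot_iff.mp (range_eq_bot i j hj.symm hi)]; rfl
      simpa [fi, hj] using hfj
  have hsurj : Surjective (fi i) := MonoidHom.range_eq_top.mp hi
  exact ⟨i, MulEquiv.ofBijective (fi i) ⟨IsSimpleGroup.injective_of_surjective hsurj, hsurj⟩,
    f_eq⟩

end SurjectionsOntoSimpleGroups

section WreathProduct

def MulAut.piCongrRightHom (G ι : Type*) [Group G] : (ι → MulAut G) →* MulAut (ι → G) where
  toFun := MulEquiv.piCongrRight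
  map_one' := rfl
  map_mul' _ _ := rfl

def wreathToMulAut (G : Type) [Group G] (n : ℕ) : Wreath (MulAut G) n →* MulAut (Fin n → G) :=
  SemidirectProduct.lift (MulAut.piCongrRightHom G (Fin n)) (permHom G n) fun σ =>
    MonoidHom.ext fun f => MulEquiv.ext fun v => funext fun i => by
      change f (σ.symm i) (v i) = f (σ.symm i) (v (σ (σ.symm i)))
      rw [Equiv.apply_symm_apply]

variable {G : Type} [Group G] {n : ℕ}

lemma wreathToMulAut_injective [Nontrivial G] : Injective (wreathToMulAut G n) := by
  rw [injective_iff_map_eq_one]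
  intro w hw
  have hfix : ∀ (v : Fin n → G) i, w.left i (v (w.right.symm i)) = v i := fun v i =>
    congrFun (DFunLike.congr_fun hw v) i
  have hright : w.right = 1 := by
    refine inv_eq_one.mp (Equiv.ext fun i => ?_)
    by_contra hne
    change w.right.symm i ≠ i at hne
    obtain ⟨g, hg⟩ := exists_ne (1 : G)
    have := hfix (Pi.mulSingle i g) i
    rw [Pi.mulSingle_eq_of_ne hne, map_one, Pi.mulSingle_eq_same] at this
    exact hg this.symm
  refine SemidirectProduct.ext (funext fun i => MulEquiv.ext fun x => ?_) hright
  simpa [hright] using hfix (fun _ => x) i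

/-- Each coordinate of an automorphism of `G^n` is an automorphism applied to one coordinate, and
these coordinates form a permutation since the automorphism is bijective. -/
lemma wreathToMulAut_surjective [IsSimpleGroup G] (hG : ∃ a b : G, a * b ≠ b * a) :
    Surjective (wreathToMulAut G n) := by
  intro φ
  have hcoord : ∀ j, ∃ i, ∃ α : MulAut G, ∀ v, φ v j = α (v i) := fun j => by
    obtain ⟨i, α, h⟩ := exists_mulAut_comp_eval_of_surjective hG
      (f := (Pi.evalMonoidHom (fun _ => G) j).comp φ.toMonoidHom)
      fun g => ⟨φ.symm fun _ => g, by simp⟩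
    exact ⟨i, α, fun v => DFunLike.congr_fun h v⟩
  choose τ α hτ using hcoord
  have τ_inj : Injective τ := by
    intro j j' h
    by_contra hne
    obtain ⟨g, hg⟩ := exists_ne (1 : G)
    have hj := hτ j (φ.symm (Pi.mulSingle j' g))
    have hj' := hτ j' (φ.symm (Pi.mulSingle j' g))
    rw [MulEquiv.apply_symm_apply, Pi.mulSingle_eq_of_ne hne, eq_comm,
      map_eq_one_iff _ (α j).injective] at hj
    rw [MulEquiv.apply_symm_apply, Pi.mulSingle_eq_same, ← h, hj, map_one] at hj'
    exact hg hj'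
  set σ := Equiv.ofBijective τ (Finite.injective_iff_bijective.mp τ_inj)
  exact ⟨⟨α, σ.symm⟩, MulEquiv.ext fun v => funext fun j => (hτ j v).symm⟩

noncomputable def wreathMulEquivMulAut [IsSimpleGroup G] (hG : ∃ a b : G, a * b ≠ b * a)
    (n : ℕ) : Wreath (MulAut G) n ≃* MulAut (Fin n → G) :=
  MulEquiv.ofBijective (wreathToMulAut G n)
    ⟨wreathToMulAut_injective, wreathToMulAut_surjective hG⟩

def Wreath.map {A B : Type} [Group A] [Group B] (f : A →* B) (n : ℕ) :
    Wreath A n →* Wreath B n :=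
  SemidirectProduct.map (f.compLeft (Fin n)) (MonoidHom.id _) fun _ => rfl

lemma Wreath.map_surjective {A B : Type} [Group A] [Group B] {f : A →* B} (hf : Surjective f) :
    Surjective (Wreath.map f n) := by
  rintro ⟨b, σ⟩
  choose a ha using hf
  exact ⟨⟨fun i => a (b i), σ⟩, SemidirectProduct.ext (funext fun i => ha (b i)) rfl⟩

lemma Wreath.mem_ker_map {A B : Type} [Group A] [Group B] {f : A →* B} {w : Wreath A n} :
    w ∈ (Wreath.map f n).ker ↔ (∀ i, w.left i ∈ f.ker) ∧ w.right = 1 := by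
  rw [MonoidHom.mem_ker, SemidirectProduct.ext_iff]
  exact and_congr funext_iff Iff.rfl

lemma wreathToMulAut_conj (u : Fin n → G) :
    wreathToMulAut G n ⟨fun i => MulAut.conj (u i), 1⟩ = MulAut.conj u := rfl

lemma map_ker_wreathMap_outMk [IsSimpleGroup G] (hG : ∃ a b : G, a * b ≠ b * a) :
    (Wreath.map OutMk n).ker.map (wreathMulEquivMulAut hG n).toMonoidHom = Inn (Fin n → G) := by
  ext φ
  constructor
  · rintro ⟨w, hw, rfl⟩
    obtain ⟨hleft, hright⟩ := Wreath.mem_ker_map.mp hw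
    choose u hu using fun i => (QuotientGroup.ker_mk' (Inn G)) ▸ hleft i
    have hw_eq : w = ⟨fun i => MulAut.conj (u i), 1⟩ :=
      SemidirectProduct.ext (funext fun i => (hu i).symm) hright
    exact ⟨u, by rw [hw_eq]; exact (wreathToMulAut_conj u).symm⟩
  · rintro ⟨u, rfl⟩
    refine ⟨⟨fun i => MulAut.conj (u i), 1⟩, Wreath.mem_ker_map.mpr ⟨fun i => ?_, rfl⟩,
      wreathToMulAut_conj u⟩
    rw [OutMk, QuotientGroup.ker_mk']
    exact ⟨u i, rfl⟩

noncomputable def outPiMulEquivWreath [IsSimpleGroup G] (hG : ∃ a b : G, a * b ≠ b * a)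
    (n : ℕ) : OutG (Fin n → G) ≃* Wreath (OutG G) n :=
  (QuotientGroup.congr _ _ (wreathMulEquivMulAut hG n) (map_ker_wreathMap_outMk hG)).symm.trans
    (QuotientGroup.quotientKerEquivOfSurjective _
      (Wreath.map_surjective (QuotientGroup.mk'_surjective _)))

end WreathProduct

section Subdirect

variable {G : Type*} [Group G] {ι : Type*}

def Subgroup.evalOfTrivialOn (H : Subgroup (ι → G)) (i : ι) (S : Set ι) : Subgroup G :=
  (H ⊓ Subgroup.pi S fun _ => ⊥).map (Pi.evalMonoidHom (fun _ => G) i)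

variable {H : Subgroup (ι → G)} {i : ι}

lemma Subgroup.mem_evalOfTrivialOn {S : Set ι} {g : G} :
    g ∈ H.evalOfTrivialOn i S ↔ ∃ v ∈ H, (∀ j ∈ S, v j = 1) ∧ v i = g := by
  simp [evalOfTrivialOn, Subgroup.mem_pi, and_assoc]

lemma Subgroup.evalOfTrivialOn_normal (hH : ∀ g, ∃ v ∈ H, v i = g) (S : Set ι) :
    (H.evalOfTrivialOn i S).Normal := ⟨by
  intro g hg t
  obtain ⟨v, hvH, hvS, rfl⟩ := mem_evalOfTrivialOn.mp hg
  obtain ⟨w, hwH, rfl⟩ := hH t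
  exact mem_evalOfTrivialOn.mpr ⟨w * v * w⁻¹, H.mul_mem (H.mul_mem hwH hvH) (H.inv_mem hwH),
    fun j hj => by simp [hvS j hj], rfl⟩⟩

/-- The commutator of an element trivial on `S` with one trivial on `T` is trivial on `S ∪ T`,
so this normal subgroup contains a nontrivial commutator of `G`. -/
lemma Subgroup.evalOfTrivialOn_union [IsSimpleGroup G] (hG : ∃ a b : G, a * b ≠ b * a)
    (hH : ∀ g, ∃ v ∈ H, v i = g) {S T : Set ι} (hS : H.evalOfTrivialOn i S = ⊤)
    (hT : H.evalOfTrivialOn i T = ⊤) : H.evalOfTrivialOn i (S ∪ T) = ⊤ := by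
  refine (evalOfTrivialOn_normal hH _).eq_bot_or_eq_top.resolve_left fun hbot => ?_
  obtain ⟨a, b, hab⟩ := hG
  obtain ⟨v, hvH, hvS, rfl⟩ := mem_evalOfTrivialOn.mp (hS ▸ mem_top a)
  obtain ⟨w, hwH, hwT, rfl⟩ := mem_evalOfTrivialOn.mp (hT ▸ mem_top b)
  have hcomm : v i * w i * (v i)⁻¹ * (w i)⁻¹ ∈ H.evalOfTrivialOn i (S ∪ T) :=
    mem_evalOfTrivialOn.mpr ⟨v * w * v⁻¹ * w⁻¹,
      H.mul_mem (H.mul_mem (H.mul_mem hvH hwH) (H.inv_mem hvH)) (H.inv_mem hwH),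
      by rintro j (hj | hj) <;> simp [hvS j, hwT j, hj], rfl⟩
  rw [hbot, mem_bot, mul_inv_eq_one, mul_inv_eq_iff_eq_mul] at hcomm
  exact hab hcomm

theorem Subgroup.eq_top_of_forall_exists_eval [IsSimpleGroup G] (hG : ∃ a b : G, a * b ≠ b * a)
    [Finite ι] [DecidableEq ι] (hH : ∀ i g, ∃ v ∈ H, v i = g)
    (hpair : ∀ i j, i ≠ j → ∀ g, ∃ v ∈ H, v j = 1 ∧ v i = g) : H = ⊤ := by
  have hfactor : ∀ i, H.evalOfTrivialOn i {i}ᶜ = ⊤ := fun i => by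
    refine Set.Finite.induction_on_subset (motive := fun S _ => H.evalOfTrivialOn i S = ⊤) _
      (Set.toFinite _) (eq_top_iff.mpr fun g _ => ?_) fun {j S} hj _ _ hS => ?_
    · obtain ⟨v, hv, rfl⟩ := hH i g
      exact mem_evalOfTrivialOn.mpr ⟨v, hv, by simp, rfl⟩
    · rw [Set.insert_eq]
      refine evalOfTrivialOn_union hG (hH i) (eq_top_iff.mpr fun g _ => ?_) hS
      obtain ⟨v, hv, hvj, rfl⟩ := hpair i j (Ne.symm hj) g
      exact mem_evalOfTrivialOn.mpr ⟨v, hv, by simpa, rfl⟩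
  refine eq_top_iff.mpr fun v _ => pi_mem_of_mulSingle_mem v fun i => ?_
  obtain ⟨w, hwH, hw1, hwi⟩ := mem_evalOfTrivialOn.mp (hfactor i ▸ mem_top (v i))
  convert hwH
  ext j
  rcases eq_or_ne j i with rfl | hj
  · simp [hwi]
  · simp [hj, hw1 j hj]

end Subdirect

lemma mem_inn_of_forall_comp_eq_conj {Γ G ι : Type} [Group Γ] [Group G] {p : ι → Γ →* G}
    (hp : Bijective (MonoidHom.pi p)) {φ : MulAut Γ}
    (h : ∀ i, ∃ s, (p i).comp φ.toMonoidHom = (MulAut.conj s).toMonoidHom.comp (p i)) :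
    φ ∈ Inn Γ := by
  choose s hs using h
  obtain ⟨u, hu⟩ := hp.2 s
  refine ⟨u, MulEquiv.ext fun z => hp.1 (funext fun i => ?_)⟩
  have hz : p i (φ z) = s i * p i z * (s i)⁻¹ := DFunLike.congr_fun (hs i) z
  have hu_i : p i u = s i := congrFun hu i
  simp [hz, hu_i]

lemma NG_le_ker {G : Type} [Group G] {f : F2 →* G} (hf : Surjective f) : NG G ≤ f.ker :=
  sInf_le ⟨f, hf, rfl⟩

namespace Gbar

variable {G : Type} [Group G]

lemma closure_xbar_ybar : closure {xbar G, ybar G} = ⊤ := by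
  have hrange : ({fx, fy} : Set F2) = Set.range FreeGroup.of := by
    ext z
    simp [fx, fy, or_comm]
  have hF : closure ({fx, fy} : Set F2) = ⊤ := by
    rw [hrange, FreeGroup.closure_range_of]
  have := closure_pair_map_eq_top hF (QuotientGroup.mk'_surjective (NG G))
  rwa [QuotientGroup.mk'_apply, QuotientGroup.mk'_apply] at this

variable {r : ℕ} {rep : Fin r → G × G} {p : Fin r → Gbar G →* G}

lemma surjective_of_apply_xbar_ybar (hrep : ∀ i, rep i ∈ GenPairs G)
    (hp : ∀ i, p i (xbar G) = (rep i).1 ∧ p i (ybar G) = (rep i).2) (i : Fin r) :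
    Surjective (p i) := by
  have hgen : closure {(rep i).1, (rep i).2} = ⊤ := hrep i
  rw [← MonoidHom.range_eq_top, eq_top_iff, ← hgen, closure_le]
  rintro _ (rfl | rfl)
  exacts [⟨xbar G, (hp i).1⟩, ⟨ybar G, (hp i).2⟩]

lemma exists_eq_mulAut_comp
    (hcover : ∀ q ∈ GenPairs G, ∃ i : Fin r, ∃ α : MulAut G, (α (rep i).1, α (rep i).2) = q)
    (hp : ∀ i, p i (xbar G) = (rep i).1 ∧ p i (ybar G) = (rep i).2)
    {f : Gbar G →* G} (hf : Surjective f) :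
    ∃ j, ∃ α : MulAut G, f = α.toMonoidHom.comp (p j) := by
  have hpair : (f (xbar G), f (ybar G)) ∈ GenPairs G :=
    closure_pair_map_eq_top closure_xbar_ybar hf
  obtain ⟨j, α, hα⟩ := hcover _ hpair
  obtain ⟨hx, hy⟩ := Prod.ext_iff.mp hα
  refine ⟨j, α, MonoidHom.eq_of_eq_on_pair closure_xbar_ybar ?_ ?_⟩
  · simpa [(hp j).1] using hx.symm
  · simpa [(hp j).2] using hy.symm

lemma eq_of_mulAut_comp_eq
    (hdist : ∀ i j : Fin r, (∃ α : MulAut G, (α (rep i).1, α (rep i).2) = rep j) → i = j)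
    (hp : ∀ i, p i (xbar G) = (rep i).1 ∧ p i (ybar G) = (rep i).2)
    {i j : Fin r} {α : MulAut G} (h : α.toMonoidHom.comp (p i) = p j) : i = j :=
  hdist i j ⟨α, Prod.ext (by rw [← (hp i).1, ← (hp j).1, ← h]; rfl)
    (by rw [← (hp i).2, ← (hp j).2, ← h]; rfl)⟩

lemma pi_injective
    (hcover : ∀ q ∈ GenPairs G, ∃ i : Fin r, ∃ α : MulAut G, (α (rep i).1, α (rep i).2) = q)
    (hp : ∀ i, p i (xbar G) = (rep i).1 ∧ p i (ybar G) = (rep i).2) :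
    Injective (MonoidHom.pi p) := by
  rw [injective_iff_map_eq_one]
  intro z hz
  obtain ⟨z, rfl⟩ := QuotientGroup.mk_surjective z
  refine (QuotientGroup.eq_one_iff z).mpr (mem_sInf.mpr ?_)
  rintro _ ⟨f, hf, rfl⟩
  obtain ⟨j, α, hj⟩ := exists_eq_mulAut_comp hcover hp
    (f := QuotientGroup.lift (NG G) f (NG_le_ker hf)) fun g => by
      obtain ⟨x, rfl⟩ := hf g
      exact ⟨x, rfl⟩
  have hzj : p j z = 1 := congrFun hz j
  calc f z = α (p j z) := DFunLike.congr_fun hj (z : Gbar G)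
    _ = 1 := by rw [hzj, map_one]

lemma pi_surjective [IsSimpleGroup G] (hG : ∃ a b : G, a * b ≠ b * a)
    (hrep : ∀ i, rep i ∈ GenPairs G)
    (hdist : ∀ i j : Fin r, (∃ α : MulAut G, (α (rep i).1, α (rep i).2) = rep j) → i = j)
    (hp : ∀ i, p i (xbar G) = (rep i).1 ∧ p i (ybar G) = (rep i).2) :
    Surjective (MonoidHom.pi p) := by
  have hsurj := surjective_of_apply_xbar_ybar hrep hp
  refine MonoidHom.range_eq_top.mp (eq_top_of_forall_exists_eval hG (fun i g => ?_)
    fun i j hij g => ?_)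
  · obtain ⟨z, rfl⟩ := hsurj i g
    exact ⟨_, ⟨z, rfl⟩, rfl⟩
  · rcases map_ker_eq_top_or_exists_mulAut (hsurj i) (hsurj j) with htop | ⟨α, hα⟩
    · obtain ⟨z, hz, rfl⟩ := mem_map.mp (htop ▸ mem_top g)
      exact ⟨_, ⟨z, rfl⟩, hz, rfl⟩
    · exact absurd (eq_of_mulAut_comp_eq hdist hp hα.symm) hij.symm

lemma exists_perm_comp_eq (hrep : ∀ i, rep i ∈ GenPairs G)
    (hdist : ∀ i j : Fin r, (∃ α : MulAut G, (α (rep i).1, α (rep i).2) = rep j) → i = j)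
    (hcover : ∀ q ∈ GenPairs G, ∃ i : Fin r, ∃ α : MulAut G, (α (rep i).1, α (rep i).2) = q)
    (hp : ∀ i, p i (xbar G) = (rep i).1 ∧ p i (ybar G) = (rep i).2) (φ : MulAut (Gbar G)) :
    ∃ (σ : Equiv.Perm (Fin r)) (ψ : Fin r → MulAut G),
      ∀ i, (p (σ i)).comp φ.toMonoidHom = (ψ i).toMonoidHom.comp (p i) := by
  have hex : ∀ i, ∃ j, ∃ ψ : MulAut G,
      (p j).comp φ.toMonoidHom = ψ.toMonoidHom.comp (p i) := fun i => by
    obtain ⟨j, β, hβ⟩ := exists_eq_mulAut_comp hcover hp (f := (p i).comp φ.symm.toMonoidHom)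
      ((surjective_of_apply_xbar_ybar hrep hp i).comp φ.symm.surjective)
    refine ⟨j, β⁻¹, MonoidHom.ext fun z => ?_⟩
    have hβz : p i z = β (p j (φ z)) := by
      simpa using DFunLike.congr_fun hβ (φ z)
    change p j (φ z) = β⁻¹ (p i z)
    rw [hβz, MulAut.inv_apply_self]
  choose σ ψ hσ using hex
  have σ_inj : Injective σ := fun i i' h => by
    refine eq_of_mulAut_comp_eq hdist hp (α := (ψ i')⁻¹ * ψ i) (MonoidHom.ext fun z => ?_)
    have h1 : p (σ i) (φ z) = ψ i (p i z) := DFunLike.congr_fun (hσ i) z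
    have h2 : p (σ i') (φ z) = ψ i' (p i' z) := DFunLike.congr_fun (hσ i') z
    change (ψ i')⁻¹ (ψ i (p i z)) = p i' z
    rw [← h1, h, h2, MulAut.inv_apply_self]
  exact ⟨Equiv.ofBijective σ (Finite.injective_iff_bijective.mp σ_inj), ψ, hσ⟩

lemma eq_and_mem_inn_of_pcMk_eq (hrep : ∀ i, rep i ∈ GenPairs G)
    (hdist : ∀ i j : Fin r, (∃ α : MulAut G, (α (rep i).1, α (rep i).2) = rep j) → i = j)
    {i j : Fin r} {ψ : MulAut G} (h : pcMk (rep i) (hrep i) = pcMkA ψ⁻¹ (rep j) (hrep j)) :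
    i = j ∧ ψ ∈ Inn G := by
  obtain ⟨t, h1, h2⟩ := Quotient.exact h
  have hx : (ψ * MulAut.conj t) (rep i).1 = (rep j).1 := by
    change ψ (t * (rep i).1 * t⁻¹) = _
    rw [show t * (rep i).1 * t⁻¹ = ψ⁻¹ (rep j).1 from h1, MulAut.apply_inv_self]
  have hy : (ψ * MulAut.conj t) (rep i).2 = (rep j).2 := by
    change ψ (t * (rep i).2 * t⁻¹) = _
    rw [show t * (rep i).2 * t⁻¹ = ψ⁻¹ (rep j).2 from h2, MulAut.apply_inv_self]
  obtain rfl : i = j := hdist i j ⟨_, Prod.ext hx hy⟩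
  have hone : ψ * MulAut.conj t = 1 :=
    MulEquiv.toMonoidHom_injective (MonoidHom.eq_of_eq_on_pair (hrep i) hx hy)
  exact ⟨rfl, t⁻¹, by rw [map_inv, eq_inv_of_mul_eq_one_left hone]⟩

end Gbar

theorem stmt15_general (G : Type) [Group G]
    (hsimple : IsSimpleGroup G) (hnonab : ∃ a b : G, a * b ≠ b * a)
    (r : ℕ) (rep : Fin r → G × G)
    (hrep : ∀ i, rep i ∈ GenPairs G)
    (hdist : ∀ i j : Fin r, (∃ α : MulAut G, (α (rep i).1, α (rep i).2) = rep j) → i = j)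
    (hcover : ∀ q ∈ GenPairs G, ∃ i : Fin r, ∃ α : MulAut G, (α (rep i).1, α (rep i).2) = q)
    (p : Fin r → (Gbar G →* G))
    (hp : ∀ i, p i (xbar G) = (rep i).1 ∧ p i (ybar G) = (rep i).2)
    (Φ : OutG (Gbar G) →* Equiv.Perm (PC G))
    (hΦ : IsPCAction G rep hrep p Φ) :
    Nonempty (MulAut (Fin r → G) ≃* Wreath (MulAut G) r) ∧
    Nonempty (OutG (Fin r → G) ≃* Wreath (OutG G) r) ∧
    Function.Injective Φ := by
  refine ⟨⟨(wreathMulEquivMulAut hnonab r).symm⟩, ⟨outPiMulEquivWreath hnonab r⟩, ?_⟩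
  rw [injective_iff_map_eq_one]
  intro q hq
  obtain ⟨φ, rfl⟩ := QuotientGroup.mk'_surjective (Inn (Gbar G)) q
  obtain ⟨σ, ψ, hσ⟩ := Gbar.exists_perm_comp_eq hrep hdist hcover hp φ
  -- `Φ φ = 1` sends each `[x_i, y_i]_c` to itself, so `σ = 1` and every `ψ i` is inner.
  have hinner : ∀ i, ∃ s, (p i).comp φ.toMonoidHom = (MulAut.conj s).toMonoidHom.comp (p i) := by
    intro i
    have h := hΦ φ σ ψ hσ 1 i
    rw [show Φ (OutMk φ) = 1 from hq, one_mul, Equiv.Perm.coe_one, id, pcMkA, one_smul] at h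
    obtain ⟨hσi, s, hs⟩ := Gbar.eq_and_mem_inn_of_pcMk_eq hrep hdist h
    exact ⟨s, by simpa [hs, ← hσi] using hσ i⟩
  exact (QuotientGroup.eq_one_iff φ).mpr (mem_inn_of_forall_comp_eq_conj
    ⟨Gbar.pi_injective hcover hp, Gbar.pi_surjective hnonab hrep hdist hp⟩ hinner)

/-- For `G` finite, simple and non-abelian: (1) `Aut(G^r) ≅ Aut(G) ≀ S_r`;
(2) `Out(G^r) ≅ Out(G) ≀ S_r`; (3) the action of `Out(Ḡ)` on `𝒫_c` is faithful. -/
theorem stmt15 (G : Type) [Group G] [Finite G]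
    (hsimple : IsSimpleGroup G) (hnonab : ∃ a b : G, a * b ≠ b * a)
    (r : ℕ) (rep : Fin r → G × G)
    (hrep : ∀ i, rep i ∈ GenPairs G)
    (hdist : ∀ i j : Fin r, (∃ α : MulAut G, (α (rep i).1, α (rep i).2) = rep j) → i = j)
    (hcover : ∀ q ∈ GenPairs G, ∃ i : Fin r, ∃ α : MulAut G, (α (rep i).1, α (rep i).2) = q)
    (p : Fin r → (Gbar G →* G))
    (hp : ∀ i, p i (xbar G) = (rep i).1 ∧ p i (ybar G) = (rep i).2)
    (Φ : OutG (Gbar G) →* Equiv.Perm (PC G))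
    (hΦ : IsPCAction G rep hrep p Φ) :
    Nonempty (MulAut (Fin r → G) ≃* Wreath (MulAut G) r) ∧
    Nonempty (OutG (Fin r → G) ≃* Wreath (OutG G) r) ∧
    Function.Injective Φ :=
  stmt15_general G hsimple hnonab r rep hrep hdist hcover p hp Φ hΦ
end
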